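/- Let (X, β) be a locally finite prechart and let x, y ∈ X be states that are not bisimilar. Then there exists i ∈ ℕ such that Φ_β^{(i)}(x, y) = Φ_β^{(i+1)}(x, y), i.e. the decreasing chain of approximants stabilises. -/

import Mathlib

open Classical in
/-- The lifting `d↑` of a distance function on `X` to `Σ × X + V`. -/
noncomputable def distLift {A V X : Type*} (d : X → X → ℝ) :
    ((A × X) ⊕ V) → ((A × X) ⊕ V) → ℝ
  | Sum.inl (a, x), Sum.inl (b, y) => if a = b then (1 / 2) * d x y else 1
  | Sum.inr v, Sum.inr w => if v = w then 0 else 1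
  | _, _ => 1

/-- Supremum of `f` over a finite set, with the convention `sup ∅ = 0`. -/
noncomputable def hSup {Y : Type*} (s : Finset Y) (f : Y → ℝ) : ℝ :=
  if h : s.Nonempty then s.sup' h f else 0

/-- Infimum of `f` over a finite set, with the convention `inf ∅ = 1`. -/
noncomputable def hInf {Y : Type*} (s : Finset Y) (f : Y → ℝ) : ℝ :=
  if h : s.Nonempty then s.inf' h f else 1

/-- Hausdorff lifting of a distance function to finite subsets. -/
noncomputable def hausdorffDist {X : Type*} (d : X → X → ℝ) (s t : Finset X) : ℝ :=
  max (hSup s fun x => hInf t fun y => d x y) (hSup t fun y => hInf s fun x => d y x)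

/-- The map `Φ_β` associated with a prechart `(Q, β)`. -/
noncomputable def Phi {A V Q : Type*} (β : Q → Finset ((A × Q) ⊕ V))
    (d : Q → Q → ℝ) : Q → Q → ℝ :=
  fun q₁ q₂ => hausdorffDist (distLift d) (β q₁) (β q₂)

/-- `d` is a 1-bounded pseudometric on `X`. -/
structure IsBPMet {X : Type*} (d : X → X → ℝ) : Prop where
  nonneg : ∀ x y, 0 ≤ d x y
  le_one : ∀ x y, d x y ≤ 1
  refl : ∀ x, d x x = 0
  symm : ∀ x y, d x y = d y x
  triangle : ∀ x y z, d x z ≤ d x y + d y z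

/-- A bisimulation between two precharts. -/
def IsBisim {A V Q₁ Q₂ : Type*} (β₁ : Q₁ → Finset ((A × Q₁) ⊕ V))
    (β₂ : Q₂ → Finset ((A × Q₂) ⊕ V)) (R : Q₁ → Q₂ → Prop) : Prop :=
  ∀ q₁ q₂, R q₁ q₂ →
    (∀ v : V, Sum.inr v ∈ β₁ q₁ ↔ Sum.inr v ∈ β₂ q₂) ∧
    (∀ (a : A) (q₁' : Q₁), Sum.inl (a, q₁') ∈ β₁ q₁ →
      ∃ q₂', Sum.inl (a, q₂') ∈ β₂ q₂ ∧ R q₁' q₂') ∧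
    (∀ (a : A) (q₂' : Q₂), Sum.inl (a, q₂') ∈ β₂ q₂ →
      ∃ q₁', Sum.inl (a, q₁') ∈ β₁ q₁ ∧ R q₁' q₂')

/-- Bisimilarity of two states of a prechart. -/
def Bisimilar {A V Q : Type*} (β : Q → Finset ((A × Q) ⊕ V)) (q₁ q₂ : Q) : Prop :=
  ∃ R, IsBisim β β R ∧ R q₁ q₂

/-- A prechart homomorphism: a function whose graph is a bisimulation. -/
def IsHom {A V Q₁ Q₂ : Type*} (β₁ : Q₁ → Finset ((A × Q₁) ⊕ V))
    (β₂ : Q₂ → Finset ((A × Q₂) ⊕ V)) (f : Q₁ → Q₂) : Prop :=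
  IsBisim β₁ β₂ fun q₁ q₂ => q₂ = f q₁

/-- Stratification of bisimilarity between two precharts. -/
def Strat2 {A V Q₁ Q₂ : Type*} (β₁ : Q₁ → Finset ((A × Q₁) ⊕ V))
    (β₂ : Q₂ → Finset ((A × Q₂) ⊕ V)) : ℕ → Q₁ → Q₂ → Prop
  | 0 => fun _ _ => True
  | n + 1 => fun q₁ q₂ =>
      (∀ v : V, Sum.inr v ∈ β₁ q₁ ↔ Sum.inr v ∈ β₂ q₂) ∧
      (∀ (a : A) (q₁' : Q₁), Sum.inl (a, q₁') ∈ β₁ q₁ →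
        ∃ q₂', Sum.inl (a, q₂') ∈ β₂ q₂ ∧ Strat2 β₁ β₂ n q₁' q₂') ∧
      (∀ (a : A) (q₂' : Q₂), Sum.inl (a, q₂') ∈ β₂ q₂ →
        ∃ q₁', Sum.inl (a, q₁') ∈ β₁ q₁ ∧ Strat2 β₁ β₂ n q₁' q₂')

/-- Stratification of bisimilarity on a single prechart. -/
def Strat {A V Q : Type*} (β : Q → Finset ((A × Q) ⊕ V)) : ℕ → Q → Q → Prop :=
  Strat2 β β

/-- One-step transition relation of a prechart. -/
def StepRel {A V Q : Type*} (β : Q → Finset ((A × Q) ⊕ V)) (q q' : Q) : Prop :=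
  ∃ a : A, Sum.inl (a, q') ∈ β q

/-- A prechart is locally finite if every state reaches only finitely many states. -/
def LocFinite {A V Q : Type*} (β : Q → Finset ((A × Q) ⊕ V)) : Prop :=
  ∀ q : Q, {q' | Relation.ReflTransGen (StepRel β) q q'}.Finite

/-- `bd` is the least fixpoint of `Φ_β` in the lattice of 1-bounded pseudometrics. -/
def IsLfpDist {A V Q : Type*} (β : Q → Finset ((A × Q) ⊕ V)) (bd : Q → Q → ℝ) : Prop :=
  IsBPMet bd ∧ Phi β bd = bd ∧
    ∀ d : Q → Q → ℝ, IsBPMet d → Phi β d = d → ∀ x y, bd x y ≤ d x y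

open Classical in
/-- The discrete pseudometric, the top element of `D_X`. -/
noncomputable def discreteDist {X : Type*} : X → X → ℝ :=
  fun x y => if x = y then 0 else 1

/-- Iterates `Φ_β^{(p)}` of `Φ_β` starting from the discrete pseudometric. -/
noncomputable def PhiIter {A V Q : Type*} (β : Q → Finset ((A × Q) ⊕ V)) :
    ℕ → Q → Q → ℝ
  | 0 => discreteDist
  | n + 1 => Phi β (PhiIter β n)


section AuxStab

variable {A V X : Type*}

/-! ### Basic facts about `hSup`, `hInf` -/

lemma myhSup_le {Y : Type*} {s : Finset Y} {f : Y → ℝ} {c : ℝ} (hc : 0 ≤ c)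
    (h : ∀ m ∈ s, f m ≤ c) : hSup s f ≤ c := by
  unfold hSup; split
  · exact Finset.sup'_le _ _ h
  · exact hc

lemma lt_of_myhSup_lt {Y : Type*} {s : Finset Y} {f : Y → ℝ} {c : ℝ} {m : Y}
    (hm : m ∈ s) (h : hSup s f < c) : f m < c := by
  unfold hSup at h
  rw [dif_pos ⟨m, hm⟩] at h
  exact lt_of_le_of_lt (Finset.le_sup' f hm) h

lemma myhInf_le {Y : Type*} {s : Finset Y} {f : Y → ℝ} {m : Y} (hm : m ∈ s) :
    hInf s f ≤ f m := by
  unfold hInf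
  rw [dif_pos ⟨m, hm⟩]
  exact Finset.inf'_le f hm

lemma myhInf_le_one {Y : Type*} {s : Finset Y} {f : Y → ℝ}
    (h : ∀ m ∈ s, f m ≤ 1) : hInf s f ≤ 1 := by
  unfold hInf; split
  · next hne => exact le_trans (Finset.inf'_le f hne.choose_spec) (h _ hne.choose_spec)
  · exact le_refl 1

lemma myhSup_mono {Y : Type*} {s : Finset Y} {f g : Y → ℝ}
    (h : ∀ m ∈ s, f m ≤ g m) : hSup s f ≤ hSup s g := by
  unfold hSup; split
  · next hne => exact Finset.sup'_le _ _ fun m hm => le_trans (h m hm) (Finset.le_sup' g hm)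
  · exact le_refl 0

lemma myhInf_mono {Y : Type*} {s : Finset Y} {f g : Y → ℝ}
    (h : ∀ m ∈ s, f m ≤ g m) : hInf s f ≤ hInf s g := by
  unfold hInf; split
  · next hne => exact Finset.le_inf' _ _ fun m hm => le_trans (Finset.inf'_le f hm) (h m hm)
  · exact le_refl 1

/-! ### distLift facts -/

lemma distLift_le_one {d : X → X → ℝ} (h0 : ∀ p q, 0 ≤ d p q) (h1 : ∀ p q, d p q ≤ 1) :
    ∀ m n : (A × X) ⊕ V, distLift d m n ≤ 1 := by
  rintro (⟨a, p⟩ | v) (⟨b, q⟩ | w) <;> simp only [distLift] <;> try norm_num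
  · split
    · nlinarith [h0 p q, h1 p q]
    · norm_num
  · split <;> norm_num

lemma distLift_mono {d d' : X → X → ℝ} (h : ∀ p q, d p q ≤ d' p q) :
    ∀ m n : (A × X) ⊕ V, distLift d m n ≤ distLift d' m n := by
  rintro (⟨a, p⟩ | v) (⟨b, q⟩ | w) <;> simp only [distLift] <;> try norm_num
  split <;> [linarith [h p q]; norm_num]

lemma distLift_self {d : X → X → ℝ} (hrefl : ∀ p, d p p = 0) :
    ∀ m : (A × X) ⊕ V, distLift d m m = 0 := by
  rintro (⟨a, p⟩ | v) <;> simp [distLift, hrefl]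

/-! ### Phi monotone and bounded -/

lemma Phi_mono (β : X → Finset ((A × X) ⊕ V)) {d d' : X → X → ℝ}
    (h : ∀ p q, d p q ≤ d' p q) (q₁ q₂ : X) : Phi β d q₁ q₂ ≤ Phi β d' q₁ q₂ := by
  unfold Phi hausdorffDist
  apply max_le_max <;>
    exact myhSup_mono fun m _ => myhInf_mono fun m' _ => distLift_mono h _ _

lemma Phi_le_discrete (β : X → Finset ((A × X) ⊕ V)) (q₁ q₂ : X) :
    Phi β discreteDist q₁ q₂ ≤ discreteDist q₁ q₂ := by
  unfold Phi hausdorffDist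
  by_cases h : q₁ = q₂
  · subst h
    simp only [discreteDist, if_pos rfl]
    apply max_le <;>
      exact myhSup_le (le_refl 0) fun m hm =>
        le_trans (myhInf_le hm) (le_of_eq (distLift_self (fun p => by simp [discreteDist]) m))
  · rw [show discreteDist q₁ q₂ = 1 from if_neg h]
    have hle : ∀ m n : (A × X) ⊕ V, distLift discreteDist m n ≤ 1 :=
      distLift_le_one (fun p q => by unfold discreteDist; split <;> norm_num)
        (fun p q => by unfold discreteDist; split <;> norm_num)
    apply max_le <;>
      exact myhSup_le (by norm_num) fun m _ => myhInf_le_one fun m' _ => hle _ _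

lemma PhiIter_antitone (β : X → Finset ((A × X) ⊕ V)) :
    ∀ i (q₁ q₂ : X), PhiIter β (i + 1) q₁ q₂ ≤ PhiIter β i q₁ q₂ := by
  intro i
  induction i with
  | zero => exact Phi_le_discrete β
  | succ j ih => exact fun q₁ q₂ => Phi_mono β ih q₁ q₂

/-! ### Dyadic values -/

def IsDyadic (v : ℝ) : Prop := v = 0 ∨ ∃ k : ℕ, v = (1 / 2 : ℝ) ^ k

lemma IsDyadic.zero : IsDyadic 0 := Or.inl rfl
lemma IsDyadic.one : IsDyadic 1 := Or.inr ⟨0, by norm_num⟩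
lemma IsDyadic.half {v : ℝ} (h : IsDyadic v) : IsDyadic ((1 / 2) * v) := by
  rcases h with h | ⟨k, h⟩
  · exact Or.inl (by rw [h]; ring)
  · exact Or.inr ⟨k + 1, by rw [h]; ring⟩

lemma hSup_dyadic {Y : Type*} {s : Finset Y} {f : Y → ℝ}
    (h : ∀ m ∈ s, IsDyadic (f m)) : IsDyadic (hSup s f) := by
  unfold hSup; split
  · next hne =>
    obtain ⟨m, hm, heq⟩ := Finset.exists_mem_eq_sup' hne f
    rw [heq]; exact h m hm
  · exact IsDyadic.zero

lemma hInf_dyadic {Y : Type*} {s : Finset Y} {f : Y → ℝ}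
    (h : ∀ m ∈ s, IsDyadic (f m)) : IsDyadic (hInf s f) := by
  unfold hInf; split
  · next hne =>
    obtain ⟨m, hm, heq⟩ := Finset.exists_mem_eq_inf' hne f
    rw [heq]; exact h m hm
  · exact IsDyadic.one

lemma distLift_dyadic {d : X → X → ℝ} (h : ∀ p q, IsDyadic (d p q)) :
    ∀ m n : (A × X) ⊕ V, IsDyadic (distLift d m n) := by
  rintro (⟨a, p⟩ | v) (⟨b, q⟩ | w) <;> simp only [distLift]
  · split
    · exact (h p q).half
    · exact IsDyadic.one
  · exact IsDyadic.one
  · exact IsDyadic.one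
  · split
    · exact IsDyadic.zero
    · exact IsDyadic.one

lemma PhiIter_dyadic (β : X → Finset ((A × X) ⊕ V)) :
    ∀ i (q₁ q₂ : X), IsDyadic (PhiIter β i q₁ q₂) := by
  intro i
  induction i with
  | zero =>
    intro q₁ q₂
    unfold PhiIter discreteDist
    split
    · exact IsDyadic.zero
    · exact IsDyadic.one
  | succ j ih =>
    intro q₁ q₂
    show IsDyadic (Phi β (PhiIter β j) q₁ q₂)
    unfold Phi hausdorffDist
    rcases max_choice (hSup (β q₁) fun m => hInf (β q₂) fun m' => distLift (PhiIter β j) m m')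
      (hSup (β q₂) fun m' => hInf (β q₁) fun m => distLift (PhiIter β j) m' m) with h | h <;>
      rw [h] <;>
      exact hSup_dyadic fun m _ => hInf_dyadic fun m' _ => distLift_dyadic ih _ _

/-! ### Strat facts -/

lemma Strat_refl (β : X → Finset ((A × X) ⊕ V)) : ∀ n (q : X), Strat β n q q := by
  intro n
  induction n with
  | zero => intro q; trivial
  | succ m ih =>
    intro q
    refine ⟨fun v => Iff.rfl, fun a q' h => ⟨q', h, ih q'⟩, fun a q' h => ⟨q', h, ih q'⟩⟩

lemma Strat_succ_imp (β : X → Finset ((A × X) ⊕ V)) :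
    ∀ n (q₁ q₂ : X), Strat β (n + 1) q₁ q₂ → Strat β n q₁ q₂ := by
  intro n
  induction n with
  | zero => intro q₁ q₂ _; trivial
  | succ m ih =>
    rintro q₁ q₂ ⟨hv, h1, h2⟩
    refine ⟨hv, fun a q₁' h => ?_, fun a q₂' h => ?_⟩
    · obtain ⟨q₂', hmem, hs⟩ := h1 a q₁' h
      exact ⟨q₂', hmem, ih _ _ hs⟩
    · obtain ⟨q₁', hmem, hs⟩ := h2 a q₂' h
      exact ⟨q₁', hmem, ih _ _ hs⟩

/-! ### Hausdorff distance elimination -/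

lemma hausdorff_lt_elim {Y : Type*} {d : Y → Y → ℝ} {s t : Finset Y} {c : ℝ}
    (hc : c ≤ 1) (h : hausdorffDist d s t < c) :
    (∀ m ∈ s, ∃ m' ∈ t, d m m' < c) ∧ (∀ m' ∈ t, ∃ m ∈ s, d m' m < c) := by
  unfold hausdorffDist at h
  have h1 := lt_of_le_of_lt (le_max_left _ _) h
  have h2 := lt_of_le_of_lt (le_max_right _ _) h
  constructor
  · intro m hm
    have hinf := lt_of_myhSup_lt hm h1
    have ht : t.Nonempty := by
      by_contra hte
      rw [Finset.not_nonempty_iff_eq_empty] at hte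
      unfold hInf at hinf
      rw [hte] at hinf
      simp at hinf
      linarith
    unfold hInf at hinf
    rw [dif_pos ht] at hinf
    rw [Finset.inf'_lt_iff] at hinf
    exact hinf
  · intro m' hm'
    have hinf := lt_of_myhSup_lt hm' h2
    have hs : s.Nonempty := by
      by_contra hse
      rw [Finset.not_nonempty_iff_eq_empty] at hse
      unfold hInf at hinf
      rw [hse] at hinf
      simp at hinf
      linarith
    unfold hInf at hinf
    rw [dif_pos hs] at hinf
    rw [Finset.inf'_lt_iff] at hinf
    exact hinf

end AuxStab
section MainStab

variable {A V X : Type*}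

lemma Strat_zero (β : X → Finset ((A × X) ⊕ V)) (p q : X) : Strat β 0 p q := trivial

lemma Strat_symm (β : X → Finset ((A × X) ⊕ V)) :
    ∀ n (p q : X), Strat β n p q → Strat β n q p := by
  intro n
  induction n with
  | zero => intro p q _; trivial
  | succ m ih =>
    rintro p q ⟨hv, h1, h2⟩
    refine ⟨fun v => (hv v).symm, fun a q' hm => ?_, fun a q' hm => ?_⟩
    · obtain ⟨p', hm', hs⟩ := h2 a q' hm
      exact ⟨p', hm', ih _ _ hs⟩
    · obtain ⟨p', hm', hs⟩ := h1 a q' hm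
      exact ⟨p', hm', ih _ _ hs⟩

/-- Key step: if the Hausdorff approximant is small, stratified bisimilarity holds. -/
lemma strat_of_phi_lt (β : X → Finset ((A × X) ⊕ V)) {d : X → X → ℝ} {n : ℕ}
    (hrec : ∀ q₁' q₂', d q₁' q₂' < 2 * (1 / 2 : ℝ) ^ n → Strat β n q₁' q₂')
    (hrec' : ∀ q₁' q₂', d q₂' q₁' < 2 * (1 / 2 : ℝ) ^ n → Strat β n q₁' q₂')
    {q₁ q₂ : X} (h : Phi β d q₁ q₂ < (1 / 2 : ℝ) ^ n) : Strat β (n + 1) q₁ q₂ := by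
  have hc1 : ((1 : ℝ) / 2) ^ n ≤ 1 := pow_le_one₀ (by norm_num) (by norm_num)
  obtain ⟨h1, h2⟩ := hausdorff_lt_elim hc1 h
  refine ⟨fun v => ?_, fun a q₁' hmem => ?_, fun a q₂' hmem => ?_⟩
  · constructor
    · intro hv
      obtain ⟨m', hm', hd⟩ := h1 _ hv
      rcases m' with ⟨b, q'⟩ | w
      · simp only [distLift] at hd; linarith
      · simp only [distLift] at hd
        split at hd
        · next he => rwa [he] at hv ⊢
        · linarith
    · intro hv
      obtain ⟨m, hm, hd⟩ := h2 _ hv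
      rcases m with ⟨b, q'⟩ | w
      · simp only [distLift] at hd; linarith
      · simp only [distLift] at hd
        split at hd
        · next he => rwa [← he] at hm
        · linarith
  · obtain ⟨m', hm', hd⟩ := h1 _ hmem
    rcases m' with ⟨b, q₂'⟩ | w
    · simp only [distLift] at hd
      split at hd
      · next he =>
        subst he
        exact ⟨q₂', hm', hrec _ _ (by linarith)⟩
      · linarith
    · simp only [distLift] at hd; linarith
  · obtain ⟨m, hm, hd⟩ := h2 _ hmem
    rcases m with ⟨b, q₁'⟩ | w
    · simp only [distLift] at hd
      split at hd
      · next he =>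
        subst he
        exact ⟨q₁', hm, hrec' _ _ (by linarith)⟩
      · linarith
    · simp only [distLift] at hd; linarith

lemma strat_of_phiIter_lt (β : X → Finset ((A × X) ⊕ V)) :
    ∀ n i (q₁ q₂ : X), PhiIter β i q₁ q₂ < (1 / 2 : ℝ) ^ n → Strat β (n + 1) q₁ q₂ := by
  intro n
  induction n with
  | zero =>
    intro i q₁ q₂ h
    cases i with
    | zero =>
      have : q₁ = q₂ := by
        by_contra hne
        unfold PhiIter discreteDist at h
        rw [if_neg hne] at h
        norm_num at h
      subst this; exact Strat_refl β 1 q₁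
    | succ j =>
      exact strat_of_phi_lt β (fun p q _ => Strat_zero β p q) (fun p q _ => Strat_zero β p q)
        (by simpa [PhiIter] using h)
  | succ m ih =>
    intro i q₁ q₂ h
    cases i with
    | zero =>
      have : q₁ = q₂ := by
        by_contra hne
        unfold PhiIter discreteDist at h
        rw [if_neg hne] at h
        have : ((1 : ℝ) / 2) ^ (m + 1) ≤ 1 := pow_le_one₀ (by norm_num) (by norm_num)
        linarith
      subst this; exact Strat_refl β (m + 2) q₁
    | succ j =>
      refine strat_of_phi_lt β (fun p q hpq => ih j p q ?_)
        (fun p q hpq => Strat_symm β _ _ _ (ih j q p ?_)) (by simpa [PhiIter] using h) <;>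
      · have : 2 * ((1 : ℝ) / 2) ^ (m + 1) = (1 / 2) ^ m := by ring
        linarith

/-- For locally finite precharts, non-bisimilar states are distinguished at some finite level. -/
lemma exists_not_strat (β : X → Finset ((A × X) ⊕ V)) (hlf : LocFinite β) {x y : X}
    (hxy : ¬ Bisimilar β x y) : ∃ N, ¬ Strat β N x y := by
  classical
  by_contra hcon
  push_neg at hcon
  set S : Set X := {q' | Relation.ReflTransGen (StepRel β) x q'} ∪
    {q' | Relation.ReflTransGen (StepRel β) y q'} with hSdef
  have hS : S.Finite := (hlf x).union (hlf y)
  have hclosed : ∀ p ∈ S, ∀ p', StepRel β p p' → p' ∈ S := by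
    rintro p (hp | hp) p' hstep
    · exact Or.inl (hp.tail hstep)
    · exact Or.inr (hp.tail hstep)
  set F : Finset X := hS.toFinset with hFdef
  have hmemF : ∀ p, p ∈ F ↔ p ∈ S := fun p => Set.Finite.mem_toFinset hS
  set T : ℕ → Finset (X × X) :=
    fun n => (F ×ˢ F).filter (fun pq => Strat β n pq.1 pq.2) with hTdef
  have hTmono : ∀ n, T (n + 1) ⊆ T n := by
    intro n pq hpq
    rw [hTdef, Finset.mem_filter] at hpq ⊢
    exact ⟨hpq.1, Strat_succ_imp β n _ _ hpq.2⟩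
  -- find N with T (N+1) = T N
  have hstab : ∃ N, T (N + 1) = T N := by
    by_contra hne
    push_neg at hne
    have hlt : ∀ n, (T (n + 1)).card < (T n).card := fun n =>
      Finset.card_lt_card (Finset.ssubset_iff_subset_ne.mpr ⟨hTmono n, hne n⟩)
    have hbound : ∀ n, (T n).card + n ≤ (T 0).card := by
      intro n
      induction n with
      | zero => simp
      | succ m ihm => have := hlt m; omega
    have := hbound ((T 0).card + 1)
    omega
  obtain ⟨N, hN⟩ := hstab
  -- T N gives a bisimulation
  have hbis : IsBisim β β (fun p q => (p, q) ∈ T N) := by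
    intro p q hpq
    have hpq' : (p, q) ∈ T (N + 1) := hN ▸ hpq
    rw [hTdef, Finset.mem_filter, Finset.mem_product] at hpq hpq'
    obtain ⟨⟨hpF, hqF⟩, hstrat⟩ := hpq'
    obtain ⟨hv, h1, h2⟩ := hstrat
    refine ⟨hv, fun a q₁' hmem => ?_, fun a q₂' hmem => ?_⟩
    · obtain ⟨q₂', hmem', hs⟩ := h1 a q₁' hmem
      refine ⟨q₂', hmem', ?_⟩
      simp only [hTdef, Finset.mem_filter, Finset.mem_product]
      refine ⟨⟨?_, ?_⟩, hs⟩
      · exact (hmemF _).mpr (hclosed p ((hmemF _).mp hpF) q₁' ⟨a, hmem⟩)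
      · exact (hmemF _).mpr (hclosed q ((hmemF _).mp hqF) q₂' ⟨a, hmem'⟩)
    · obtain ⟨q₁', hmem', hs⟩ := h2 a q₂' hmem
      refine ⟨q₁', hmem', ?_⟩
      simp only [hTdef, Finset.mem_filter, Finset.mem_product]
      refine ⟨⟨?_, ?_⟩, hs⟩
      · exact (hmemF _).mpr (hclosed p ((hmemF _).mp hpF) q₁' ⟨a, hmem'⟩)
      · exact (hmemF _).mpr (hclosed q ((hmemF _).mp hqF) q₂' ⟨a, hmem⟩)
  apply hxy
  refine ⟨fun p q => (p, q) ∈ T N, hbis, ?_⟩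
  simp only [hTdef, Finset.mem_filter, Finset.mem_product]
  exact ⟨⟨(hmemF _).mpr (Or.inl Relation.ReflTransGen.refl),
    (hmemF _).mpr (Or.inr Relation.ReflTransGen.refl)⟩, hcon N⟩

end MainStab
/-- For a locally finite prechart and non-bisimilar states, the decreasing
chain of approximants stabilises. -/
theorem PhiIter_stabilises {A V X : Type*}
    (β : X → Finset ((A × X) ⊕ V)) (hlf : LocFinite β) (x y : X)
    (hxy : ¬ Bisimilar β x y) :
    ∃ i : ℕ, PhiIter β i x y = PhiIter β (i + 1) x y := by
  classical
  obtain ⟨N, hN⟩ := exists_not_strat β hlf hxy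
  cases N with
  | zero => exact absurd (Strat_zero β x y) hN
  | succ n =>
    have hlb : ∀ i, (1 / 2 : ℝ) ^ n ≤ PhiIter β i x y := fun i =>
      le_of_not_gt fun h => hN (strat_of_phiIter_lt β n i x y h)
    by_contra hcon
    push_neg at hcon
    have hdy : ∀ i, ∃ k : ℕ, PhiIter β i x y = (1 / 2 : ℝ) ^ k := by
      intro i
      rcases PhiIter_dyadic β i x y with h0 | hk
      · exfalso
        have := hlb i
        rw [h0] at this
        have : (0 : ℝ) < (1 / 2 : ℝ) ^ n := by positivity
        linarith
      · exact hk
    choose k hk using hdy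
    have hanti : StrictAnti fun m : ℕ => (1 / 2 : ℝ) ^ m :=
      pow_right_strictAnti₀ (by norm_num) (by norm_num)
    have hkle : ∀ i, k i ≤ n := by
      intro i
      have h := hlb i
      rw [hk i] at h
      exact hanti.le_iff_ge.mp h
    have hklt : ∀ i, k i < k (i + 1) := by
      intro i
      have hle := PhiIter_antitone β i x y
      have hlt : PhiIter β (i + 1) x y < PhiIter β i x y :=
        lt_of_le_of_ne hle fun he => hcon i he.symm
      rw [hk i, hk (i + 1)] at hlt
      exact hanti.lt_iff_gt.mp hlt
    have hge : ∀ i, i ≤ k i := by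
      intro i
      induction i with
      | zero => exact Nat.zero_le _
      | succ m ihm => have := hklt m; omega
    have := hge (n + 1)
    have := hkle (n + 1)
    omega
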